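/- The closure (in ℝ^{p−1} × ℝ^{q−1} × ℝ) of the complement C ∖ f_1(C) equals E = {(x,y,z) ∈ C : z ≥ 1/2 + (x_1 + ⋯ + x_{p−1})/2}, equivalently E = {(x,y,z) ∈ C : x_1 + ⋯ + x_{p−1} + 2(1 − z) ≤ 1}. -/

import Mathlib

open Set

/-- The set `C = Δ^{p-1} × [0,1]^{q-1} × [0,1] ⊆ ℝ^{p-1} × ℝ^{q-1} × ℝ`. -/
def Cset (p q : ℕ) : Set ((Fin (p - 1) → ℝ) × (Fin (q - 1) → ℝ) × ℝ) :=
  {v | (∀ i, 0 ≤ v.1 i) ∧ (∑ i, v.1 i) ≤ 1 ∧ (∀ j, v.2.1 j ∈ Icc (0 : ℝ) 1) ∧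
    v.2.2 ∈ Icc (0 : ℝ) 1}

/-- The map `f_t(x,y,z) = (x, y, z(1 + (x₁ + ⋯ + x_{p-1} - 1)t/2))`. -/
noncomputable def fmap (p q : ℕ) (t : ℝ)
    (v : (Fin (p - 1) → ℝ) × (Fin (q - 1) → ℝ) × ℝ) :
    (Fin (p - 1) → ℝ) × (Fin (q - 1) → ℝ) × ℝ :=
  (v.1, v.2.1, v.2.2 * (1 + ((∑ i, v.1 i) - 1) * t / 2))

/-!
Since `f₁` multiplies the `z`-coordinate by `(1 + x₁ + ⋯ + x_{p-1})/2`, it maps each vertical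
fibre `[0,1]` of `C` onto `[0, (1 + Σx)/2]`. Hence `C \ f₁(C)` is the part of `C` strictly above
the graph `z = (1 + Σx)/2`. Its closure is the closed set `E` of points of `C` on or above that
graph: each `v ∈ E` is the endpoint of the open segment from the apex `(0, y, 1)` to `v`, and by
convexity of `C` this segment lies in the strict region.
-/

variable {p q : ℕ}

lemma Cset_eq_prod (p q : ℕ) :
    Cset p q = (Ici 0 ∩ {x | ∑ i, x i ≤ 1}) ×ˢ univ.pi (fun _ => Icc 0 1) ×ˢ Icc 0 1 := by
  ext v
  simp only [Cset, mem_ofPred_eq, mem_prod, mem_inter_iff, mem_Ici, Pi.le_def, Pi.zero_apply,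
    mem_univ_pi, and_assoc]

lemma isClosed_Cset (p q : ℕ) : IsClosed (Cset p q) := by
  rw [Cset_eq_prod]
  refine IsClosed.prod ?_ ((isClosed_set_pi fun _ _ => isClosed_Icc).prod isClosed_Icc)
  exact isClosed_le continuous_const continuous_id |>.inter <|
    isClosed_le (continuous_finsetSum _ fun i _ => continuous_apply i) continuous_const

lemma convex_Cset (p q : ℕ) : Convex ℝ (Cset p q) := by
  rw [Cset_eq_prod]
  refine Convex.prod ?_ ((convex_pi fun _ _ => convex_Icc 0 1).prod (convex_Icc 0 1))
  exact (convex_Ici 0).inter <| convex_halfSpace_le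
    ⟨fun x y => Finset.sum_add_distrib, fun c x => by simp [Finset.mul_sum]⟩ 1

lemma fmap_one_apply (v : (Fin (p - 1) → ℝ) × (Fin (q - 1) → ℝ) × ℝ) :
    fmap p q 1 v = (v.1, v.2.1, v.2.2 * ((∑ i, v.1 i + 1) / 2)) := by
  simp only [fmap]
  ring_nf

lemma mem_fmap_one_image_iff {v : (Fin (p - 1) → ℝ) × (Fin (q - 1) → ℝ) × ℝ}
    (hv : v ∈ Cset p q) : v ∈ fmap p q 1 '' Cset p q ↔ v.2.2 ≤ (∑ i, v.1 i + 1) / 2 := by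
  obtain ⟨hx, hs, hy, hz⟩ := hv
  have hsum : 0 ≤ (∑ i, v.1 i + 1) / 2 := by
    have := Finset.sum_nonneg fun i (_ : i ∈ Finset.univ) => hx i
    positivity
  have hfibre := image_mul_right_Icc zero_le_one hsum
  rw [zero_mul, one_mul] at hfibre
  constructor
  · rintro ⟨u, ⟨-, -, -, hu⟩, rfl⟩
    rw [fmap_one_apply] at hz ⊢
    exact (hfibre ▸ mem_image_of_mem _ hu).2
  · intro hle
    obtain ⟨c, hc, hcz⟩ : v.2.2 ∈ (fun x => x * ((∑ i, v.1 i + 1) / 2)) '' Icc 0 1 := by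
      rw [hfibre]
      exact ⟨hz.1, hle⟩
    refine ⟨(v.1, v.2.1, c), ⟨hx, hs, hy, hc⟩, ?_⟩
    rw [fmap_one_apply]
    exact Prod.ext rfl (Prod.ext rfl hcz)

lemma Cset_diff_fmap_one_image (p q : ℕ) :
    Cset p q \ fmap p q 1 '' Cset p q = {v ∈ Cset p q | (∑ i, v.1 i + 1) / 2 < v.2.2} := by
  ext v
  refine ⟨fun ⟨hv, hnot⟩ => ⟨hv, ?_⟩, fun ⟨hv, hlt⟩ => ⟨hv, ?_⟩⟩
  · exact not_le.mp ((mem_fmap_one_image_iff hv).not.mp hnot)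
  · exact (mem_fmap_one_image_iff hv).not.mpr hlt.not_ge

lemma Cset_le_subset_closure_Cset_lt (p q : ℕ) :
    {v ∈ Cset p q | 1 / 2 + (∑ i, v.1 i) / 2 ≤ v.2.2} ⊆
      closure {v ∈ Cset p q | (∑ i, v.1 i + 1) / 2 < v.2.2} := by
  rintro v ⟨hv, hle⟩
  set w : (Fin (p - 1) → ℝ) × (Fin (q - 1) → ℝ) × ℝ := (0, v.2.1, 1)
  have hw : w ∈ Cset p q := ⟨fun _ => le_rfl, by simp [w], hv.2.2.1, zero_le_one, le_rfl⟩
  have hseg : openSegment ℝ w v ⊆ {v ∈ Cset p q | (∑ i, v.1 i + 1) / 2 < v.2.2} := by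
    rintro _ ⟨a, b, ha, hb, hab, rfl⟩
    refine ⟨convex_Cset p q hw hv ha.le hb.le hab, ?_⟩
    simp only [w, Prod.fst_add, Prod.snd_add, Prod.smul_fst, Prod.smul_snd, Pi.add_apply,
      Pi.smul_apply, Pi.zero_apply, smul_eq_mul, mul_zero, zero_add, ← Finset.mul_sum]
    nlinarith
  exact closure_mono hseg (segment_subset_closure_openSegment (right_mem_segment ℝ w v))

theorem closure_complement_fmap_one_general (p q : ℕ) :
    closure (Cset p q \ (fmap p q 1 '' Cset p q)) =
      {v ∈ Cset p q | 1 / 2 + (∑ i, v.1 i) / 2 ≤ v.2.2} ∧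
    {v ∈ Cset p q | 1 / 2 + (∑ i, v.1 i) / 2 ≤ v.2.2} =
      {v ∈ Cset p q | (∑ i, v.1 i) + 2 * (1 - v.2.2) ≤ 1} := by
  have hE_closed : IsClosed {v ∈ Cset p q | 1 / 2 + (∑ i, v.1 i) / 2 ≤ v.2.2} := by
    show IsClosed (Cset p q ∩ {v | 1 / 2 + (∑ i, v.1 i) / 2 ≤ v.2.2})
    exact (isClosed_Cset p q).inter <| isClosed_le (by fun_prop) (by fun_prop)
  refine ⟨?_, ?_⟩
  · rw [Cset_diff_fmap_one_image]
    refine (closure_minimal ?_ hE_closed).antisymm (Cset_le_subset_closure_Cset_lt p q)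
    exact fun v ⟨hv, hlt⟩ => ⟨hv, by linarith⟩
  · ext v
    exact and_congr_right fun _ => by constructor <;> intro <;> linarith

/-- The closure of `C \ f₁(C)` equals `E = {(x,y,z) ∈ C : z ≥ 1/2 + (x₁+⋯+x_{p-1})/2}`,
which equals `{(x,y,z) ∈ C : x₁+⋯+x_{p-1} + 2(1-z) ≤ 1}`. -/
theorem closure_complement_fmap_one (p q : ℕ) (hp : 1 ≤ p) (hq : 1 ≤ q) :
    closure (Cset p q \ (fmap p q 1 '' Cset p q)) =
      {v ∈ Cset p q | 1 / 2 + (∑ i, v.1 i) / 2 ≤ v.2.2} ∧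
    {v ∈ Cset p q | 1 / 2 + (∑ i, v.1 i) / 2 ≤ v.2.2} =
      {v ∈ Cset p q | (∑ i, v.1 i) + 2 * (1 - v.2.2) ≤ 1} :=
  closure_complement_fmap_one_general p q
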